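/- arXiv:1608.07329 — 5 statements merged into one kernel-verified Lean document; each statement's English description precedes it below -/
import Mathlib

section
/- Let σ ≤ k be positive integers. The maximum of Σ_{j=1}^{k} |N(S_j)|, taken over all schedules, i.e. families (S_1,…,S_k) of subsets of X in which each x ∈ X belongs to at most σ of the sets S_j, equals the maximum of Σ_{y ∈ Y} |F(y)| taken over all labelings f that assign to each x ∈ X a set f(x) of exactly σ labels from {1,…,k}. (Hence the optimal scheduling problem for average detection/isolation is equivalent to the graph labeling problem.) -/
/-!
Transposing the incidence relation `x ∈ S j ↔ j ∈ f x` identifies schedules with labelings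
whose label sets have at most `σ` elements. Both objectives count the pairs `(j, y)` such that
target `y` is covered in slot `j`, so they agree under this identification. Finally, enlarging
label sets to exactly `σ` elements (possible as `σ ≤ k`) can only increase the coverage.
-/

open Finset

section Transpose

variable {α β : Type*}

def transposeFamily [Fintype β] [DecidableEq α] (S : β → Finset α) : α → Finset β :=
  fun a => univ.filter fun b => a ∈ S b

@[simp]
lemma mem_transposeFamily [Fintype β] [DecidableEq α] {S : β → Finset α} {a : α} {b : β} :
    b ∈ transposeFamily S a ↔ a ∈ S b := by
  simp [transposeFamily]

@[simp]
lemma transposeFamily_transposeFamily [Fintype α] [Fintype β] [DecidableEq α] [DecidableEq β]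
    (S : β → Finset α) : transposeFamily (transposeFamily S) = S := by
  ext b a
  simp

end Transpose

section Coverage

variable {X Y J : Type*} [Fintype X] [Fintype Y] [Fintype J]
  [DecidableEq X] [DecidableEq Y] [DecidableEq J]

lemma sum_card_biUnion_eq_sum_card_biUnion_transposeFamily (A : X → Y → Prop)
    [∀ x y, Decidable (A x y)] (S : J → Finset X) :
    ∑ j, ((S j).biUnion fun x => univ.filter fun y => A x y).card
      = ∑ y, ((univ.filter fun x => A x y).biUnion (transposeFamily S)).card := by
  have covered_targets : ∀ j, ((S j).biUnion fun x => univ.filter fun y => A x y)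
      = univ.filter fun y => ∃ x ∈ S j, A x y := fun j => by
    ext y
    simp
  have covering_slots : ∀ y, (univ.filter fun x => A x y).biUnion (transposeFamily S)
      = univ.filter fun j => ∃ x ∈ S j, A x y := fun y => by
    ext j
    simp [and_comm]
  simp only [covered_targets, covering_slots, card_filter]
  exact sum_comm

end Coverage

lemma sum_card_biUnion_mono {X Y J : Type*} [DecidableEq J] (s : Finset Y) (M : Y → Finset X) {f g : X → Finset J}
    (h : ∀ x, f x ⊆ g x) :
    ∑ y ∈ s, ((M y).biUnion f).card ≤ ∑ y ∈ s, ((M y).biUnion g).card :=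
  sum_le_sum fun _ _ => card_le_card (biUnion_mono fun x _ => h x)

lemma exists_forall_subset_card_eq {X J : Type*} [Fintype J] {σ : ℕ}
    (hσ : σ ≤ Fintype.card J) (f : X → Finset J) (hf : ∀ x, (f x).card ≤ σ) :
    ∃ g : X → Finset J, (∀ x, f x ⊆ g x) ∧ ∀ x, (g x).card = σ := by
  choose g hfg _ hg using fun x => exists_subsuperset_card_eq (subset_univ (f x)) (hf x) hσ
  exact ⟨g, hfg, hg⟩

theorem schedule_max_eq_labeling_max_general
    {X Y : Type*} [Fintype X] [Fintype Y] [DecidableEq X] [DecidableEq Y]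
    (A : X → Y → Prop) [∀ x y, Decidable (A x y)] (k σ : ℕ) (hk : σ ≤ k) :
    ((Finset.univ : Finset (Fin k → Finset X)).filter
        (fun S => ∀ x : X, (Finset.univ.filter fun j : Fin k => x ∈ S j).card ≤ σ)).sup
      (fun S => ∑ j : Fin k,
        ((S j).biUnion (fun x => Finset.univ.filter fun y : Y => A x y)).card)
    = ((Finset.univ : Finset (X → Finset (Fin k))).filter
        (fun f => ∀ x : X, (f x).card = σ)).sup
      (fun f => ∑ y : Y, ((Finset.univ.filter fun x : X => A x y).biUnion f).card) := by
  apply le_antisymm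
  · refine Finset.sup_le fun S hS => ?_
    simp only [mem_filter, mem_univ, true_and] at hS
    obtain ⟨g, hSg, hg⟩ := exists_forall_subset_card_eq (by simpa using hk) (transposeFamily S) hS
    calc _ = _ := sum_card_biUnion_eq_sum_card_biUnion_transposeFamily A S
      _ ≤ _ := sum_card_biUnion_mono _ _ hSg
      _ ≤ _ := le_sup (f := fun f => ∑ y : Y, ((univ.filter fun x => A x y).biUnion f).card)
          (by simpa using hg)
  · refine Finset.sup_le fun f hf => ?_
    rw [← transposeFamily_transposeFamily f,
      ← sum_card_biUnion_eq_sum_card_biUnion_transposeFamily A]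
    refine le_sup (f := fun S : Fin k → Finset X => ∑ j,
      ((S j).biUnion fun x => univ.filter fun y => A x y).card) ?_
    simp_all [transposeFamily]

/-- the maximum of `Σ_j |N(S_j)|` over all schedules `(S_1,…,S_k)` of
subsets of `X` where each `x` belongs to at most `σ` of the sets, equals the maximum
of `Σ_{y ∈ Y} |F(y)|` over all labelings assigning exactly `σ` labels from `{1,…,k}`
to each `x ∈ X`. -/
theorem schedule_max_eq_labeling_max
    {X Y : Type*} [Fintype X] [Fintype Y] [DecidableEq X] [DecidableEq Y]
    (A : X → Y → Prop) [∀ x y, Decidable (A x y)] (k σ : ℕ) (hσ : 0 < σ) (hk : σ ≤ k) :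
    ((Finset.univ : Finset (Fin k → Finset X)).filter
        (fun S => ∀ x : X, (Finset.univ.filter fun j : Fin k => x ∈ S j).card ≤ σ)).sup
      (fun S => ∑ j : Fin k,
        ((S j).biUnion (fun x => Finset.univ.filter fun y : Y => A x y)).card)
    = ((Finset.univ : Finset (X → Finset (Fin k))).filter
        (fun f => ∀ x : X, (f x).card = σ)).sup
      (fun f => ∑ y : Y, ((Finset.univ.filter fun x : X => A x y).biUnion f).card) :=
  schedule_max_eq_labeling_max_general A k σ hk
end

section
/- For every labeling f and every x ∈ X, the potential decomposes as φ(f) = U_x(f) + Σ_{j=1}^{k} |⋃_{z ∈ S_j(f), z ≠ x} N(z)|; that is, the potential equals the utility of player x plus, summed over all labels j, the number of targets covered in slot j by devices other than x. -/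
open Finset

/-- The set of targets covered by the device at `x`. -/
def Nbr {X Y : Type*} [Fintype Y] (A : X → Y → Prop) [∀ x y, Decidable (A x y)] (x : X) :
    Finset Y :=
  Finset.univ.filter fun y => A x y

/-- The set of devices active in slot `j` under labeling `f`. -/
def Sset {X : Type*} [Fintype X] {k : ℕ} (f : X → Finset (Fin k)) (j : Fin k) :
    Finset X :=
  Finset.univ.filter fun x => j ∈ f x

/-- The potential `φ(f) = Σ_{j=1}^{k} |⋃_{x ∈ S_j(f)} N(x)|`. -/
def potential {X Y : Type*} [Fintype X] [Fintype Y] [DecidableEq Y]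
    (A : X → Y → Prop) [∀ x y, Decidable (A x y)] {k : ℕ} (f : X → Finset (Fin k)) : ℕ :=
  ∑ j : Fin k, ((Sset f j).biUnion (Nbr A)).card

/-- The utility of player `x`:
`U_x(f) = Σ_{j ∈ f(x)} |N(x) \ ⋃_{z ∈ S_j(f), z ≠ x} N(z)|`. -/
def utility {X Y : Type*} [Fintype X] [Fintype Y] [DecidableEq X] [DecidableEq Y]
    (A : X → Y → Prop) [∀ x y, Decidable (A x y)] {k : ℕ} (f : X → Finset (Fin k)) (x : X) : ℕ :=
  ∑ j ∈ f x, ((Nbr A x) \ (((Sset f j).erase x).biUnion (Nbr A))).card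

theorem Finset.card_biUnion_of_mem {ι α : Type*} [DecidableEq ι] [DecidableEq α]
    {s : Finset ι} {i : ι} (hi : i ∈ s) (t : ι → Finset α) :
    #(s.biUnion t) = #(t i \ (s.erase i).biUnion t) + #((s.erase i).biUnion t) := by
  conv_lhs => rw [← insert_erase hi, biUnion_insert]
  exact (card_sdiff_add_card _ _).symm

theorem Finset.card_biUnion_eq_ite_add {ι α : Type*} [DecidableEq ι] [DecidableEq α]
    (s : Finset ι) (i : ι) (t : ι → Finset α) :
    #(s.biUnion t) =
      (if i ∈ s then #(t i \ (s.erase i).biUnion t) else 0) + #((s.erase i).biUnion t) := by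
  split_ifs with hi
  · exact card_biUnion_of_mem hi t
  · rw [erase_eq_of_notMem hi, zero_add]

theorem mem_Sset {X : Type*} [Fintype X] {k : ℕ} {f : X → Finset (Fin k)} {j : Fin k} {x : X} :
    x ∈ Sset f j ↔ j ∈ f x := by
  simp [Sset]

/-- for every labeling `f` and every `x ∈ X`, the potential decomposes as
`φ(f) = U_x(f) + Σ_{j=1}^{k} |⋃_{z ∈ S_j(f), z ≠ x} N(z)|`. -/
theorem potential_decomposition
    {X Y : Type*} [Fintype X] [Fintype Y] [DecidableEq X] [DecidableEq Y]
    (A : X → Y → Prop) [∀ x y, Decidable (A x y)] (k : ℕ)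
    (f : X → Finset (Fin k)) (x : X) :
    potential A f
      = utility A f x
        + ∑ j : Fin k, (((Sset f j).erase x).biUnion (Nbr A)).card := by
  simp only [potential, utility, card_biUnion_eq_ite_add (Sset f _) x, mem_Sset,
    sum_add_distrib, sum_ite_mem, univ_inter]
end

section
/- The graph labeling game is a potential game with potential function φ: for every player x ∈ X and every pair of labelings f and f' that agree on all players other than x (i.e., f(z) = f'(z) for all z ≠ x), the change in x's utility equals the change in the potential: U_x(f) − U_x(f') = φ(f) − φ(f'). -/
open Finset

/-! In every slot `j`, the coverage `|⋃_{z ∈ S_j} N(z)|` is the coverage of the players other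
than `x` plus the marginal coverage of `x`, which is `x`'s utility from slot `j`. Summing over
slots, `φ(f) = U_x(f) + C`, where `C` only depends on the labels of the other players. -/

theorem Finset.card_biUnion_erase_add_card_sdiff {α β : Type*} [DecidableEq α] [DecidableEq β]
    {s : Finset α} {a : α} (ha : a ∈ s) (t : α → Finset β) :
    #((s.erase a).biUnion t) + #(t a \ (s.erase a).biUnion t) = #(s.biUnion t) := by
  rw [add_comm, card_sdiff_add_card, ← biUnion_insert, insert_erase ha]

section LabelingGame

variable {X Y : Type*} [Fintype X] [Fintype Y] [DecidableEq X] [DecidableEq Y]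
  (A : X → Y → Prop) [∀ x y, Decidable (A x y)] {k : ℕ}

theorem card_biUnion_Sset_eq (g : X → Finset (Fin k)) (x : X) (j : Fin k) :
    #((Sset g j).biUnion (Nbr A))
      = #(((Sset g j).erase x).biUnion (Nbr A))
        + if j ∈ g x then #(Nbr A x \ ((Sset g j).erase x).biUnion (Nbr A)) else 0 := by
  split_ifs with hj
  · exact (card_biUnion_erase_add_card_sdiff (by simpa [Sset] using hj) _).symm
  · rw [erase_eq_of_notMem (by simpa [Sset] using hj), add_zero]

theorem potential_eq_sum_erase_add_utility (g : X → Finset (Fin k)) (x : X) :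
    potential A g = ∑ j, #(((Sset g j).erase x).biUnion (Nbr A)) + utility A g x := by
  rw [potential, utility, ← univ_inter (g x), ← sum_ite_mem, ← sum_add_distrib]
  exact sum_congr rfl fun j _ => card_biUnion_Sset_eq A g x j

theorem Sset_erase_eq_of_eq_of_ne {f f' : X → Finset (Fin k)} {x : X}
    (h : ∀ z, z ≠ x → f z = f' z) (j : Fin k) :
    (Sset f j).erase x = (Sset f' j).erase x := by
  ext z
  by_cases hz : z = x
  · simp [hz]
  · simp [Sset, hz, h z hz]

end LabelingGame

/-- the labeling game is a potential game with potential `φ`: for every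
player `x` and every pair of labelings `f`, `f'` agreeing on all players other than
`x`, the change in `x`'s utility equals the change in the potential. -/
theorem labeling_potential_game
    {X Y : Type*} [Fintype X] [Fintype Y] [DecidableEq X] [DecidableEq Y]
    (A : X → Y → Prop) [∀ x y, Decidable (A x y)] (k : ℕ)
    (x : X) (f f' : X → Finset (Fin k))
    (h : ∀ z : X, z ≠ x → f z = f' z) :
    (utility A f x : ℤ) - utility A f' x
      = (potential A f : ℤ) - potential A f' := by
  rw [potential_eq_sum_erase_add_utility A f x, potential_eq_sum_erase_add_utility A f' x]
  simp only [Sset_erase_eq_of_eq_of_ne h]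
  push_cast
  ring
end

section
/- Every maximizer of the potential function is a Nash equilibrium of the labeling game: if a labeling f maximizes φ among all labelings, then for every player x ∈ X and every labeling f' that agrees with f on all players other than x, we have U_x(f) ≥ U_x(f'). -/
/-!
Removing player `x` from slot `j` loses exactly the targets that only `x` covers there, so the
potential splits as `φ(f) = U_x(f) + φ_{-x}(f)`, where `φ_{-x}` (`potentialWithout`) is the
potential of the game without `x`. A unilateral deviation of `x` leaves `φ_{-x}` unchanged, so it
changes `U_x` and `φ` by the same amount, and cannot raise `U_x` at a maximizer of `φ`.
-/

open Finset

theorem Finset.card_biUnion_eq_card_sdiff_add_card_biUnion_erase {ι α : Type*} [DecidableEq ι]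
    [DecidableEq α] {s : Finset ι} {a : ι} (ha : a ∈ s) (t : ι → Finset α) :
    (s.biUnion t).card = (t a \ (s.erase a).biUnion t).card + ((s.erase a).biUnion t).card := by
  rw [← insert_erase ha, biUnion_insert, erase_insert (notMem_erase a s), card_sdiff_add_card]

section LabelingGame

variable {X Y : Type*} [Fintype X] [Fintype Y] [DecidableEq X] [DecidableEq Y]
  (A : X → Y → Prop) [∀ x y, Decidable (A x y)] {k : ℕ}

def potentialWithout (f : X → Finset (Fin k)) (x : X) : ℕ :=
  ∑ j : Fin k, (((Sset f j).erase x).biUnion (Nbr A)).card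

theorem potential_eq_utility_add_potentialWithout (f : X → Finset (Fin k)) (x : X) :
    potential A f = utility A f x + potentialWithout A f x := by
  have slot (j : Fin k) : ((Sset f j).biUnion (Nbr A)).card =
      (if j ∈ f x then (Nbr A x \ ((Sset f j).erase x).biUnion (Nbr A)).card else 0) +
        (((Sset f j).erase x).biUnion (Nbr A)).card := by
    by_cases hj : j ∈ f x
    · rw [if_pos hj]
      exact Finset.card_biUnion_eq_card_sdiff_add_card_biUnion_erase (by simp [Sset, hj]) _
    · rw [if_neg hj, Finset.erase_eq_of_notMem (by simp [Sset, hj]), zero_add]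
  rw [potential, utility, potentialWithout, Finset.sum_congr rfl fun j _ => slot j,
    Finset.sum_add_distrib, Finset.sum_ite_mem, Finset.univ_inter]

variable {A}

theorem Sset_erase_eq_of_forall_ne {f f' : X → Finset (Fin k)} {x : X}
    (h : ∀ z, z ≠ x → f' z = f z) (j : Fin k) : (Sset f' j).erase x = (Sset f j).erase x := by
  ext z
  simp only [Finset.mem_erase, Sset, Finset.mem_filter, Finset.mem_univ, true_and]
  exact and_congr_right fun hz => by rw [h z hz]

theorem potentialWithout_eq_of_forall_ne {f f' : X → Finset (Fin k)} {x : X}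
    (h : ∀ z, z ≠ x → f' z = f z) : potentialWithout A f' x = potentialWithout A f x := by
  simp only [potentialWithout, Sset_erase_eq_of_forall_ne h]

end LabelingGame

/-- every maximizer of the potential function is a Nash equilibrium of
the labeling game. -/
theorem potential_maximizer_is_nash
    {X Y : Type*} [Fintype X] [Fintype Y] [DecidableEq X] [DecidableEq Y]
    (A : X → Y → Prop) [∀ x y, Decidable (A x y)] (k : ℕ)
    (f : X → Finset (Fin k))
    (hmax : ∀ g : X → Finset (Fin k), potential A g ≤ potential A f) :
    ∀ (x : X) (f' : X → Finset (Fin k)),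
      (∀ z : X, z ≠ x → f' z = f z) → utility A f' x ≤ utility A f x := by
  intro x f' hf'
  have h := hmax f'
  rw [potential_eq_utility_add_potentialWithout A f x,
    potential_eq_utility_add_potentialWithout A f' x, potentialWithout_eq_of_forall_ne hf'] at h
  exact Nat.le_of_add_le_add_right h
end

section
/- The optimal average detection performance is non-increasing in the network lifetime: fix a positive integer σ and for each positive integer k let M(k) denote the maximum of Σ_{j=1}^{k} |N(S_j)| over all families (S_1,…,S_k) of subsets of X in which each x ∈ X belongs to at most σ of the sets S_j. Then for all positive integers k ≤ k', M(k)/k ≥ M(k')/k'. -/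
/-!
Take an optimal schedule for `k'` slots. Discarding a slot of least coverage never lowers the
average coverage per slot, so some `k` of its slots have average coverage at least `M(k')/k'`;
restricted to those slots it is still a schedule, so `M(k)/k ≥ M(k')/k'`.
-/

open Finset

/-- `Mval A σ k` is the maximum of `Σ_{j=1}^{k} |N(S_j)|` over all schedules
`(S_1,…,S_k)` of subsets of `X` in which each `x ∈ X` belongs to at most `σ` of the
sets `S_j`. -/
def Mval {X Y : Type*} [Fintype X] [Fintype Y] [DecidableEq X] [DecidableEq Y]
    (A : X → Y → Prop) [∀ x y, Decidable (A x y)] (σ k : ℕ) : ℕ :=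
  ((Finset.univ : Finset (Fin k → Finset X)).filter
      (fun S => ∀ x : X, (Finset.univ.filter fun j : Fin k => x ∈ S j).card ≤ σ)).sup
    (fun S => ∑ j : Fin k,
      ((S j).biUnion (fun x => Finset.univ.filter fun y : Y => A x y)).card)

open scoped BigOperators

namespace Finset

variable {ι K : Type*} [Field K] [LinearOrder K] [IsStrictOrderedRing K]

lemma exists_expect_le_expect_erase (f : ι → K) {s : Finset ι} [DecidableEq ι]
    (hs : 1 < #s) : ∃ a ∈ s, 𝔼 i ∈ s, f i ≤ 𝔼 i ∈ s.erase a, f i := by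
  obtain ⟨a, ha, hmin⟩ := s.exists_min_image f (card_pos.1 (by omega))
  refine ⟨a, ha, ?_⟩
  have hmin_le : #(s.erase a) • f a ≤ ∑ i ∈ s.erase a, f i :=
    card_nsmul_le_sum _ _ _ fun i hi => hmin i (mem_of_mem_erase hi)
  have hcard : (#s : K) = #(s.erase a) + 1 := mod_cast (card_erase_add_one ha).symm
  have hpos : (0 : K) < #(s.erase a) := by
    rw [card_erase_of_mem ha]; exact_mod_cast Nat.sub_pos_of_lt hs
  rw [expect_eq_sum_div_card, expect_eq_sum_div_card, ← add_sum_erase s f ha, hcard,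
    div_le_div_iff₀ (by linarith) hpos]
  rw [nsmul_eq_mul] at hmin_le
  linarith

lemma exists_subset_card_eq_expect_le_expect (f : ι → K) {s : Finset ι} {k : ℕ}
    (hk : 0 < k) (hks : k ≤ #s) : ∃ t ⊆ s, #t = k ∧ 𝔼 i ∈ s, f i ≤ 𝔼 i ∈ t, f i := by
  classical
  obtain ⟨d, hd⟩ := Nat.exists_eq_add_of_le hks
  induction d generalizing s with
  | zero => exact ⟨s, subset_rfl, hd, le_rfl⟩
  | succ d ih =>
    obtain ⟨a, ha, hle⟩ := exists_expect_le_expect_erase f (s := s) (by omega)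
    obtain ⟨t, hts, htk, hlt⟩ := ih (s := s.erase a) (by rw [card_erase_of_mem ha]; omega)
      (by rw [card_erase_of_mem ha]; omega)
    exact ⟨t, hts.trans (erase_subset a s), htk, hle.trans hlt⟩

end Finset

section Schedule

variable {X Y ι κ : Type*} [DecidableEq X]

def IsSchedule [Fintype ι] (σ : ℕ) (S : ι → Finset X) : Prop :=
  ∀ x, #{i | x ∈ S i} ≤ σ

lemma IsSchedule.comp_injective [Fintype ι] [Fintype κ] {σ : ℕ} {S : ι → Finset X}
    (hS : IsSchedule σ S) {e : κ → ι} (he : Function.Injective e) : IsSchedule σ (S ∘ e) :=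
  fun x => (card_le_card_of_injOn e (fun j hj => by simpa using hj) he.injOn).trans (hS x)

variable [Fintype X] [Fintype Y] [DecidableEq Y]

def neighbors (A : X → Y → Prop) [∀ x y, Decidable (A x y)] (T : Finset X) : Finset Y :=
  T.biUnion fun x => {y | A x y}

variable (A : X → Y → Prop) [∀ x y, Decidable (A x y)] {σ : ℕ}

lemma sum_card_neighbors_le_Mval {k : ℕ} {S : Fin k → Finset X} (hS : IsSchedule σ S) :
    ∑ j, #(neighbors A (S j)) ≤ Mval A σ k :=
  le_sup (f := fun S : Fin k → Finset X => ∑ j, #(neighbors A (S j)))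
    (mem_filter.2 ⟨mem_univ _, hS⟩)

lemma exists_isSchedule_Mval_eq (σ k : ℕ) :
    ∃ S : Fin k → Finset X, IsSchedule σ S ∧ Mval A σ k = ∑ j, #(neighbors A (S j)) := by
  have hne : (univ.filter fun S : Fin k → Finset X => ∀ x, #{j | x ∈ S j} ≤ σ).Nonempty :=
    ⟨fun _ => ∅, by simp⟩
  obtain ⟨S, hS, hmax⟩ := exists_mem_eq_sup _ hne fun S => ∑ j, #(neighbors A (S j))
  exact ⟨S, (mem_filter.1 hS).2, hmax⟩

lemma sum_card_neighbors_le_Mval_of_card_eq [Fintype ι] {S : ι → Finset X}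
    (hS : IsSchedule σ S) {t : Finset ι} {k : ℕ} (ht : #t = k) :
    ∑ i ∈ t, #(neighbors A (S i)) ≤ Mval A σ k := by
  let e : Fin k ≃ t := (t.equivFinOfCardEq ht).symm
  calc ∑ i ∈ t, #(neighbors A (S i)) = ∑ j, #(neighbors A (S (e j))) := by
        rw [← sum_coe_sort t, ← e.sum_comp]
    _ ≤ Mval A σ k :=
        sum_card_neighbors_le_Mval A (hS.comp_injective (Subtype.val_injective.comp e.injective))

end Schedule

theorem optimal_detection_antitone_general
    {X Y : Type*} [Fintype X] [Fintype Y] [DecidableEq X] [DecidableEq Y]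
    (A : X → Y → Prop) [∀ x y, Decidable (A x y)] (σ : ℕ)
    (k k' : ℕ) (hk : 0 < k) (hkk' : k ≤ k') :
    (Mval A σ k : ℚ) / k ≥ (Mval A σ k' : ℚ) / k' := by
  obtain ⟨S, hS, hM⟩ := exists_isSchedule_Mval_eq A σ k'
  obtain ⟨t, -, ht, havg⟩ := exists_subset_card_eq_expect_le_expect
    (fun j => (#(neighbors A (S j)) : ℚ)) hk (s := univ) (by simpa using hkk')
  calc (Mval A σ k' : ℚ) / k' = 𝔼 j, (#(neighbors A (S j)) : ℚ) := by
        rw [hM, Fintype.expect_eq_sum_div_card, Fintype.card_fin]; push_cast; rfl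
    _ ≤ 𝔼 j ∈ t, (#(neighbors A (S j)) : ℚ) := havg
    _ = (∑ j ∈ t, #(neighbors A (S j)) : ℕ) / k := by
        rw [expect_eq_sum_div_card, ht]; push_cast; rfl
    _ ≤ Mval A σ k / k := by
        gcongr; exact sum_card_neighbors_le_Mval_of_card_eq A hS ht

/-- the optimal average detection performance is non-increasing in the
network lifetime: for positive integers `k ≤ k'`, `M(k)/k ≥ M(k')/k'`. -/
theorem optimal_detection_antitone
    {X Y : Type*} [Fintype X] [Fintype Y] [DecidableEq X] [DecidableEq Y]
    (A : X → Y → Prop) [∀ x y, Decidable (A x y)] (σ : ℕ) (hσ : 0 < σ)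
    (k k' : ℕ) (hk : 0 < k) (hkk' : k ≤ k') :
    (Mval A σ k : ℚ) / k ≥ (Mval A σ k' : ℚ) / k' :=
  optimal_detection_antitone_general A σ k k' hk hkk'
end
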